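/- For any vectors q_i, k_j in R^d (i,j in [n]), define α = max_j ||k_j||², w_j = sqrt(α - ||k_j||²), and let k'_j = (k_j, w_j), q'_i = (q_i, 0) in R^{d+1}. Then for every i and every x in R^n, ∑_j x_j · exp(⟨q_i,k_j⟩/√d) = exp(||q_i||²/(2√d)) · exp(α/(2√d)) · ∑_j x_j · exp(-||q'_i - k'_j||²/(2√d)). -/
import Mathlib


open Finset

theorem stmt_0 (d n : ℕ) (hd : 0 < d) (hn : 0 < n)
    (q k : Fin n → Fin d → ℝ) (x : Fin n → ℝ) (α : ℝ)
    (hα : IsGreatest (Set.range fun j => ∑ t, (k j t) ^ 2) α)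
    (w : Fin n → ℝ) (hw : ∀ j, w j = Real.sqrt (α - ∑ t, (k j t) ^ 2))
    (k' q' : Fin n → Fin (d + 1) → ℝ)
    (hk' : ∀ j, k' j = Fin.snoc (k j) (w j))
    (hq' : ∀ i, q' i = Fin.snoc (q i) 0) :
    ∀ i : Fin n,
      ∑ j, x j * Real.exp ((∑ t, q i t * k j t) / Real.sqrt d) =
        Real.exp ((∑ t, (q i t) ^ 2) / (2 * Real.sqrt d)) *
          Real.exp (α / (2 * Real.sqrt d)) *
          ∑ j, x j * Real.exp (-(∑ t, (q' i t - k' j t) ^ 2) / (2 * Real.sqrt d)) := by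
  intro i
  have hs : (0 : ℝ) < Real.sqrt d := Real.sqrt_pos.mpr (by exact_mod_cast hd)
  have hs' : Real.sqrt d ≠ 0 := ne_of_gt hs
  rw [mul_assoc]
  simp only [Finset.mul_sum]
  refine Finset.sum_congr rfl fun j _ => ?_
  have hαj : (∑ t, (k j t) ^ 2) ≤ α := hα.2 ⟨j, rfl⟩
  have hw2 : (w j) ^ 2 = α - ∑ t, (k j t) ^ 2 := by
    rw [hw j, Real.sq_sqrt (by linarith)]
  have hsum : (∑ t, (q' i t - k' j t) ^ 2) =
      (∑ t, (q i t - k j t) ^ 2) + (w j) ^ 2 := by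
    rw [hk', hq', Fin.sum_univ_castSucc]
    simp [Fin.snoc_castSucc, Fin.snoc_last]
  have hexpand : (∑ t, (q i t - k j t) ^ 2) =
      (∑ t, (q i t) ^ 2) + (∑ t, (k j t) ^ 2) - 2 * ∑ t, q i t * k j t := by
    rw [← Finset.sum_add_distrib, Finset.mul_sum, ← Finset.sum_sub_distrib]
    exact Finset.sum_congr rfl fun t _ => by ring
  have key : Real.exp ((∑ t, q i t * k j t) / Real.sqrt d) =
      Real.exp ((∑ t, (q i t) ^ 2) / (2 * Real.sqrt d)) *
        (Real.exp (α / (2 * Real.sqrt d)) *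
          Real.exp ((-∑ t, (q' i t - k' j t) ^ 2) / (2 * Real.sqrt d))) := by
    rw [← Real.exp_add, ← Real.exp_add]
    congr 1
    rw [hsum, hw2, hexpand]
    field_simp
    ring
  rw [key]; ring
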